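/- arXiv:2305.11644 — 4 statements merged into one kernel-verified Lean document; each statement's English description precedes it below -/
import Mathlib

section
/- Let n and d be positive integers and let G be an (n,d)-Ramanujan graph. Then any two disjoint sets of vertices A and B with |A| ≥ 4n·d^{-1/8} and |B| ≥ 4n·d^{-1/8} are connected by an edge of G, i.e., there exist a ∈ A and b ∈ B that are adjacent in G. -/
open Finset

/-- A simple graph `G` on a finite vertex set of cardinality `n` is `(n,d)`-Ramanujan
if it is `d`-regular and every real vector `x` on the vertices whose coordinates sum
to `0` satisfies `‖Ax‖₂ ≤ 2√(d−1)·‖x‖₂`, where `A` is the adjacency matrix of `G`. -/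
def IsRamanujan {V : Type*} [Fintype V] [DecidableEq V] (n d : ℕ)
    (G : SimpleGraph V) [DecidableRel G.Adj] : Prop :=
  Fintype.card V = n ∧ G.IsRegularOfDegree d ∧
    ∀ x : V → ℝ, (∑ v, x v) = 0 →
      Real.sqrt (∑ v, ((G.adjMatrix ℝ).mulVec x v) ^ 2) ≤
        2 * Real.sqrt ((d : ℝ) - 1) * Real.sqrt (∑ v, (x v) ^ 2)

/-!
If no edge joins `A` to `B`, test the spectral bound on the centred indicator `f = 1_A - |A|/n`.
Every vertex of `B` sees only the constant part of `f`, so `Af = -d|A|/n` on `B`, and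
`|B| (d|A|/n)² ≤ ‖Af‖² ≤ 4(d-1)‖f‖² ≤ 4d|A|`, i.e. `d|A||B| ≤ 4n²`.
The size assumption gives `d|A||B| ≥ 16n² d^{3/4} ≥ 16n²`, a contradiction.
-/

namespace SimpleGraph

variable {V : Type*} [Fintype V] [DecidableEq V]

noncomputable def centeredIndicator (A : Finset V) (v : V) : ℝ :=
  (if v ∈ A then 1 else 0) - #A / Fintype.card V

lemma sum_centeredIndicator [Nonempty V] (A : Finset V) : ∑ v, centeredIndicator A v = 0 := by
  have hN : (Fintype.card V : ℝ) ≠ 0 := by positivity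
  simp only [centeredIndicator, sum_sub_distrib, sum_boole, sum_const, card_univ, nsmul_eq_mul,
    filter_mem_eq_inter, univ_inter]
  field_simp
  ring

lemma sum_sq_centeredIndicator [Nonempty V] (A : Finset V) :
    ∑ v, centeredIndicator A v ^ 2 = #A * (Fintype.card V - #A) / Fintype.card V := by
  have hN : (Fintype.card V : ℝ) ≠ 0 := by positivity
  have hsq (v : V) : centeredIndicator A v ^ 2 = (1 - 2 * #A / Fintype.card V) *
      (if v ∈ A then 1 else 0) + (#A / Fintype.card V : ℝ) ^ 2 := by
    unfold centeredIndicator; split_ifs <;> ring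
  simp only [hsq, sum_add_distrib, ← mul_sum, sum_boole, sum_const, card_univ, nsmul_eq_mul,
    filter_mem_eq_inter, univ_inter]
  field_simp
  ring

variable {G : SimpleGraph V} [DecidableRel G.Adj]

lemma adjMatrix_mulVec_centeredIndicator_of_forall_not_adj {d : ℕ} (hG : G.IsRegularOfDegree d)
    {A : Finset V} {v : V} (hv : ∀ a ∈ A, ¬G.Adj a v) :
    (G.adjMatrix ℝ).mulVec (centeredIndicator A) v = -(d * #A / Fintype.card V) := by
  have hA : ∑ u ∈ G.neighborFinset v, (if u ∈ A then (1 : ℝ) else 0) = 0 :=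
    sum_eq_zero fun u hu ↦ if_neg fun huA ↦ hv u huA ((G.mem_neighborFinset v u).1 hu).symm
  simp only [adjMatrix_mulVec_apply, centeredIndicator, sum_sub_distrib, hA, sum_const,
    card_neighborFinset_eq_degree, hG v, nsmul_eq_mul]
  ring

/-- One-sided expander mixing lemma. -/
theorem sq_mul_card_mul_card_le_of_forall_not_adj {d : ℕ} (hG : G.IsRegularOfDegree d) {μ : ℝ}
    (hμ : ∀ x : V → ℝ, ∑ v, x v = 0 → ∑ v, (G.adjMatrix ℝ).mulVec x v ^ 2 ≤ μ * ∑ v, x v ^ 2)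
    {A B : Finset V} (hA : A.Nonempty) (hAB : ∀ a ∈ A, ∀ b ∈ B, ¬G.Adj a b) :
    (d : ℝ) ^ 2 * #A * #B ≤ μ * Fintype.card V * (Fintype.card V - #A) := by
  have : Nonempty V := ⟨hA.choose⟩
  set N : ℝ := (Fintype.card V : ℝ)
  have hN : 0 < N := by positivity
  set y := (G.adjMatrix ℝ).mulVec (centeredIndicator A)
  have hyB : ∀ v ∈ B, y v = -(d * #A / N) := fun v hv ↦
    adjMatrix_mulVec_centeredIndicator_of_forall_not_adj hG fun a haA ↦ hAB a haA v hv
  have key : #B * (d * #A / N) ^ 2 ≤ μ * (#A * (N - #A) / N) :=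
    calc #B * (d * #A / N) ^ 2 = ∑ v ∈ B, y v ^ 2 := by
          rw [sum_congr rfl fun v hv ↦ by rw [hyB v hv], sum_const, nsmul_eq_mul, neg_sq]
      _ ≤ ∑ v, y v ^ 2 := sum_le_univ_sum_of_nonneg fun v ↦ sq_nonneg _
      _ ≤ μ * (#A * (N - #A) / N) := by
          rw [← sum_sq_centeredIndicator]; exact hμ _ (sum_centeredIndicator A)
  have key' : (#A / N ^ 2) * ((d : ℝ) ^ 2 * #A * #B) ≤ (#A / N ^ 2) * (μ * N * (N - #A)) := by
    convert key using 1 <;> field_simp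
  exact le_of_mul_le_mul_left key' (by positivity)

theorem _root_.IsRamanujan.sum_sq_mulVec_le {n d : ℕ} (hG : IsRamanujan n d G) (hd : 0 < d)
    (x : V → ℝ) (hx : ∑ v, x v = 0) :
    ∑ v, (G.adjMatrix ℝ).mulVec x v ^ 2 ≤ 4 * (d - 1) * ∑ v, x v ^ 2 := by
  have hd1 : (0 : ℝ) ≤ d - 1 := by rw [sub_nonneg]; exact_mod_cast hd
  have h := (Real.sqrt_le_iff.1 (hG.2.2 x hx)).2
  rw [mul_pow, mul_pow, Real.sq_sqrt hd1, Real.sq_sqrt (by positivity)] at h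
  linarith

theorem _root_.IsRamanujan.mul_card_mul_card_le_of_forall_not_adj {n d : ℕ}
    (hG : IsRamanujan n d G) (hd : 0 < d) {A B : Finset V}
    (hAB : ∀ a ∈ A, ∀ b ∈ B, ¬G.Adj a b) : (d : ℝ) * (#A * #B) ≤ 4 * n ^ 2 := by
  rcases A.eq_empty_or_nonempty with rfl | hA
  · simp only [card_empty, Nat.cast_zero, zero_mul, mul_zero]; positivity
  have hmix := sq_mul_card_mul_card_le_of_forall_not_adj hG.2.1 (hG.sum_sq_mulVec_le hd) hA hAB
  rw [hG.1] at hmix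
  have hAn : (#A : ℝ) ≤ n := by rw [← hG.1]; exact_mod_cast card_le_univ A
  have hdn : ((d : ℝ) - 1) * (n - #A) ≤ d * n :=
    mul_le_mul (by linarith) (by linarith) (by linarith) (by positivity)
  have : (d : ℝ) * (d * (#A * #B)) ≤ d * (4 * n ^ 2) :=
    calc (d : ℝ) * (d * (#A * #B)) = d ^ 2 * #A * #B := by ring
      _ ≤ 4 * n * ((d - 1) * (n - #A)) := by linarith
      _ ≤ 4 * n * (d * n) := by gcongr
      _ = d * (4 * n ^ 2) := by ring
  exact le_of_mul_le_mul_left this (by positivity)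

end SimpleGraph

lemma sixteen_mul_sq_le_mul_sq_rpow {d : ℝ} (hd : 1 ≤ d) (n : ℝ) :
    16 * n ^ 2 ≤ d * (4 * n * d ^ (-(1 / 8 : ℝ))) ^ 2 := by
  have hd0 : 0 < d := by linarith
  have h : d * (d ^ (-(1 / 8 : ℝ))) ^ 2 = d ^ (3 / 4 : ℝ) := by
    rw [← Real.rpow_natCast, ← Real.rpow_mul hd0.le, ← Real.rpow_one_add' hd0.le] <;> norm_num
  have h1 : 1 ≤ d ^ (3 / 4 : ℝ) := Real.one_le_rpow hd (by norm_num)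
  calc 16 * n ^ 2 ≤ 16 * n ^ 2 * d ^ (3 / 4 : ℝ) := le_mul_of_one_le_right (by positivity) h1
    _ = d * (4 * n * d ^ (-(1 / 8 : ℝ))) ^ 2 := by rw [← h]; ring

theorem ramanujan_expanding_general {V : Type*} [Fintype V] [DecidableEq V]
    (n d : ℕ) (hn : 0 < n) (hd : 0 < d)
    (G : SimpleGraph V) [DecidableRel G.Adj] (hG : IsRamanujan n d G)
    (A B : Finset V)
    (hA : 4 * (n : ℝ) * (d : ℝ) ^ (-(1 / 8 : ℝ)) ≤ A.card)
    (hB : 4 * (n : ℝ) * (d : ℝ) ^ (-(1 / 8 : ℝ)) ≤ B.card) :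
    ∃ a ∈ A, ∃ b ∈ B, G.Adj a b := by
  by_contra! hAB
  have hupper := hG.mul_card_mul_card_le_of_forall_not_adj hd hAB
  have hlower : 16 * (n : ℝ) ^ 2 ≤ d * (#A * #B) := by
    refine (sixteen_mul_sq_le_mul_sq_rpow (Nat.one_le_cast.2 hd) n).trans ?_
    have hc : 0 ≤ 4 * (n : ℝ) * (d : ℝ) ^ (-(1 / 8 : ℝ)) := by positivity
    gcongr
    rw [sq]
    exact mul_le_mul hA hB hc (hc.trans hA)
  have hn2 : (0 : ℝ) < n ^ 2 := by positivity
  linarith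

/-- in an `(n,d)`-Ramanujan graph, any two disjoint vertex sets of size
at least `4n·d^{-1/8}` each are connected by an edge. -/
theorem ramanujan_expanding {V : Type*} [Fintype V] [DecidableEq V]
    (n d : ℕ) (hn : 0 < n) (hd : 0 < d)
    (G : SimpleGraph V) [DecidableRel G.Adj] (hG : IsRamanujan n d G)
    (A B : Finset V) (hdisj : Disjoint A B)
    (hA : 4 * (n : ℝ) * (d : ℝ) ^ (-(1 / 8 : ℝ)) ≤ A.card)
    (hB : 4 * (n : ℝ) * (d : ℝ) ^ (-(1 / 8 : ℝ)) ≤ B.card) :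
    ∃ a ∈ A, ∃ b ∈ B, G.Adj a b :=
  ramanujan_expanding_general n d hn hd G hG A B hA hB
end

section
/- Let n and d be positive integers and let G be an (n,d)-Ramanujan graph. If S is a set of vertices of G with |S| ≥ n·d^{-1/8}, then the number of edges of the subgraph of G induced by S satisfies vol(S) ≥ δ(d)·|S|, where δ(d) = (d^{7/8} − d^{5/8})/2. -/
/-!
Expander mixing. Let `α = |S|/n` and `x = 1_S - α·1`. Then `∑ x = 0`, `⟨x, x⟩ = (1 - α)|S|` and,
by `d`-regularity, `⟨x, Ax⟩ = 2 vol(S) - dα|S|`. Cauchy–Schwarz and the Ramanujan bound give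
`⟨x, Ax⟩ ≥ -2√(d-1)⟨x, x⟩`, hence `2 vol(S) ≥ (dα - 2√(d-1)(1 - α))|S|`. The bracket increases
with `α`; with `t = d^{1/8}` and `α ≥ 1/t` it is at least `t^7 - 2t^3(t - 1) ≥ t^7 - t^5`.
-/

open Finset

open scoped Classical in
/-- `vol G S` is the number of edges of the subgraph of `G` induced by `S`,
i.e. the number of edges of `G` with both endpoints in `S`. -/
noncomputable def vol {V : Type*} [Fintype V] [DecidableEq V]
    (G : SimpleGraph V) [DecidableRel G.Adj] (S : Finset V) : ℕ :=
  (G.edgeFinset.filter fun e => ∀ v ∈ e, v ∈ S).card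

/-- `δ(d) = (d^{7/8} − d^{5/8})/2`. -/
noncomputable def deltaOf (d : ℕ) : ℝ :=
  ((d : ℝ) ^ (7 / 8 : ℝ) - (d : ℝ) ^ (5 / 8 : ℝ)) / 2

open Matrix

theorem neg_mul_dotProduct_self_le_dotProduct_mulVec {V : Type*} [Fintype V] {μ : ℝ}
    (M : Matrix V V ℝ) (x : V → ℝ)
    (hM : √(∑ v, (M *ᵥ x) v ^ 2) ≤ μ * √(∑ v, x v ^ 2)) :
    -(μ * (x ⬝ᵥ x)) ≤ x ⬝ᵥ M *ᵥ x := by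
  have hx : x ⬝ᵥ x = √(∑ v, x v ^ 2) * √(∑ v, x v ^ 2) := by
    rw [Real.mul_self_sqrt (by positivity), dotProduct]
    simp only [sq]
  have hcs := Real.sum_mul_le_sqrt_mul_sqrt univ (-x) (M *ᵥ x)
  simp only [Pi.neg_apply, neg_mul, sum_neg_distrib, neg_sq] at hcs
  rw [hx, dotProduct]
  nlinarith [Real.sqrt_nonneg (∑ v, x v ^ 2)]

namespace SimpleGraph

variable {V : Type*} [Fintype V] {G : SimpleGraph V} [DecidableRel G.Adj] {d : ℕ}

theorem adjMatrix_mulVec_one_of_regular {R : Type*} [NonAssocSemiring R]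
    (hreg : G.IsRegularOfDegree d) : G.adjMatrix R *ᵥ 1 = (d : R) • 1 :=
  funext fun v ↦ by simp [hreg v]

theorem one_vecMul_adjMatrix_of_regular {R : Type*} [NonAssocSemiring R]
    (hreg : G.IsRegularOfDegree d) : 1 ᵥ* G.adjMatrix R = (d : R) • 1 :=
  funext fun v ↦ by simp [hreg v]

theorem indicator_dotProduct_one (S : Finset V) :
    (S : Set V).indicator 1 ⬝ᵥ (1 : V → ℝ) = #S := by
  classical
  simp [dotProduct_one, Set.indicator_apply]

theorem dotProduct_self_indicator_sub_smul_one (S : Finset V) (c : ℝ) :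
    ((S : Set V).indicator 1 - c • 1) ⬝ᵥ ((S : Set V).indicator 1 - c • 1) =
      #S - c * (2 * #S - Fintype.card V * c) := by
  have hff : (S : Set V).indicator 1 ⬝ᵥ (S : Set V).indicator (1 : V → ℝ) = #S := by
    classical
    simp [dotProduct, Set.indicator_apply]
  simp only [sub_dotProduct, dotProduct_sub, smul_dotProduct, dotProduct_smul, hff,
    indicator_dotProduct_one, dotProduct_comm 1, one_dotProduct_one, smul_eq_mul]
  ring

theorem indicator_dotProduct_adjMatrix_mulVec_indicator {R : Type*} [NonAssocSemiring R]
    (S : Finset V) :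
    (S : Set V).indicator 1 ⬝ᵥ G.adjMatrix R *ᵥ (S : Set V).indicator 1 =
      #(G.interedges S S) := by
  classical
  simp only [dotProduct, mulVec, Set.indicator_apply, interedges_def, card_filter, sum_product]
  push_cast
  simp [ite_mul]

variable [DecidableEq V]

theorem vol_eq_card_edgeFinset_induce (S : Finset V) :
    vol G S = #(G.induce (S : Set V)).edgeFinset := by
  rw [← card_filter_edgeFinset_toFinset_subset, vol]
  congr 1
  ext e
  simp [Finset.subset_iff]

theorem card_interedges_self_eq_two_mul_vol (S : Finset V) :
    #(G.interedges S S) = 2 * vol G S := by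
  rw [vol_eq_card_edgeFinset_induce, two_mul_card_edgeFinset]
  refine card_bij'
    (fun p hp ↦ (⟨p.1, (G.mem_interedges_iff.1 hp).1⟩, ⟨p.2, (G.mem_interedges_iff.1 hp).2.1⟩))
    (fun p _ ↦ (p.1.1, p.2.1)) ?_ ?_ ?_ ?_ <;> simp [mem_interedges_iff]

theorem dotProduct_adjMatrix_mulVec_indicator_sub_smul_one (hreg : G.IsRegularOfDegree d)
    (S : Finset V) (c : ℝ) :
    ((S : Set V).indicator 1 - c • 1) ⬝ᵥ G.adjMatrix ℝ *ᵥ ((S : Set V).indicator 1 - c • 1) =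
      2 * vol G S - d * c * (2 * #S - Fintype.card V * c) := by
  have hvecMul : (1 : V → ℝ) ⬝ᵥ G.adjMatrix ℝ *ᵥ (S : Set V).indicator 1 = d * #S := by
    rw [dotProduct_mulVec, one_vecMul_adjMatrix_of_regular hreg, smul_dotProduct,
      dotProduct_comm, indicator_dotProduct_one, smul_eq_mul]
  simp only [mulVec_sub, mulVec_smul, adjMatrix_mulVec_one_of_regular hreg, sub_dotProduct,
    dotProduct_sub, smul_dotProduct, dotProduct_smul,
    indicator_dotProduct_adjMatrix_mulVec_indicator, card_interedges_self_eq_two_mul_vol,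
    hvecMul, indicator_dotProduct_one, one_dotProduct_one, smul_eq_mul]
  push_cast
  ring

theorem mul_card_le_two_mul_vol_of_isRegularOfDegree {μ : ℝ} (hreg : G.IsRegularOfDegree d)
    (hμ : ∀ x : V → ℝ, ∑ v, x v = 0 →
      √(∑ v, (G.adjMatrix ℝ *ᵥ x) v ^ 2) ≤ μ * √(∑ v, x v ^ 2))
    (S : Finset V) :
    (d * (#S / Fintype.card V) - μ * (1 - #S / Fintype.card V)) * #S ≤ 2 * vol G S := by
  set c : ℝ := #S / Fintype.card V
  have hNc : Fintype.card V * c = #S := by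
    rcases eq_or_ne (Fintype.card V) 0 with hN | hN
    · have hS : #S = 0 := Nat.eq_zero_of_le_zero (hN ▸ card_le_univ S)
      simp [hN, hS]
    · exact mul_div_cancel₀ _ (Nat.cast_ne_zero.2 hN)
  set x := (S : Set V).indicator 1 - c • (1 : V → ℝ)
  have hsum : ∑ v, x v = 0 := by
    simp [x, ← dotProduct_one, indicator_dotProduct_one, hNc]
  have hquad := neg_mul_dotProduct_self_le_dotProduct_mulVec _ x (hμ x hsum)
  rw [dotProduct_self_indicator_sub_smul_one,
    dotProduct_adjMatrix_mulVec_indicator_sub_smul_one hreg, hNc] at hquad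
  linarith

end SimpleGraph

theorem pow_seven_sub_pow_five_le {t r c : ℝ} (ht : 1 ≤ t) (hr₀ : 0 ≤ r) (hr : r ≤ t ^ 4)
    (hc : t⁻¹ ≤ c) : t ^ 7 - t ^ 5 ≤ t ^ 8 * c - 2 * r * (1 - c) := by
  have htc : 1 ≤ t * c := by
    rwa [inv_le_iff_one_le_mul₀' (by linarith)] at hc
  nlinarith [mul_le_mul_of_nonneg_right hr (by linarith : 0 ≤ t - 1), sq_nonneg (t - 1),
    pow_pos (by linarith : 0 < t) 3,
    mul_le_mul_of_nonneg_right htc (by positivity : 0 ≤ t ^ 8 + 2 * r)]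

theorem two_mul_deltaOf_le {d : ℕ} (hd : 0 < d) {c : ℝ} (hc : (d : ℝ) ^ (-(1 / 8 : ℝ)) ≤ c) :
    2 * deltaOf d ≤ d * c - 2 * √(d - 1) * (1 - c) := by
  set t : ℝ := (d : ℝ) ^ (1 / 8 : ℝ) with ht_def
  have hpow (k : ℕ) : (d : ℝ) ^ ((k : ℝ) / 8) = t ^ k := by
    rw [ht_def, ← Real.rpow_natCast, ← Real.rpow_mul (Nat.cast_nonneg d)]
    ring_nf
  have hd8 : (d : ℝ) = t ^ 8 := by rw [← hpow 8]; norm_num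
  have hsqrt : √(d - 1 : ℝ) ≤ t ^ 4 := by
    calc √(d - 1 : ℝ) ≤ √(t ^ 4 * t ^ 4) := Real.sqrt_le_sqrt (by rw [← pow_add, ← hd8]; linarith)
      _ = t ^ 4 := Real.sqrt_mul_self (by positivity)
  have ht : 1 ≤ t := Real.one_le_rpow (by exact_mod_cast hd) (by norm_num)
  have hc' : t⁻¹ ≤ c := by rwa [Real.rpow_neg (Nat.cast_nonneg d)] at hc
  have hpoly := pow_seven_sub_pow_five_le ht (Real.sqrt_nonneg _) hsqrt hc'
  rw [← hd8] at hpoly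
  rw [deltaOf, show (7 / 8 : ℝ) = (7 : ℕ) / 8 by norm_num,
    show (5 / 8 : ℝ) = (5 : ℕ) / 8 by norm_num, hpow, hpow]
  linarith

/-- in an `(n,d)`-Ramanujan graph, every vertex set `S` with
`|S| ≥ n·d^{-1/8}` satisfies `vol(S) ≥ δ(d)·|S|`. -/
theorem ramanujan_vol_lower_bound {V : Type*} [Fintype V] [DecidableEq V]
    (n d : ℕ) (hn : 0 < n) (hd : 0 < d)
    (G : SimpleGraph V) [DecidableRel G.Adj] (hG : IsRamanujan n d G)
    (S : Finset V)
    (hS : (n : ℝ) * (d : ℝ) ^ (-(1 / 8 : ℝ)) ≤ S.card) :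
    deltaOf d * S.card ≤ vol G S := by
  obtain ⟨hcard, hreg, hspec⟩ := hG
  have hmix := G.mul_card_le_two_mul_vol_of_isRegularOfDegree hreg hspec S
  rw [hcard] at hmix
  have hdensity : (d : ℝ) ^ (-(1 / 8 : ℝ)) ≤ #S / n := by
    rw [le_div_iff₀ (by exact_mod_cast hn)]
    linarith
  have hδ := mul_le_mul_of_nonneg_right (two_mul_deltaOf_le hd hdensity) (Nat.cast_nonneg #S)
  linarith
end

section
/- Let n and d be positive integers with d ≥ 16 and (d^{7/8} − d^{5/8})/2 ≥ 8·d^{3/4} + 4·√d (which holds for all sufficiently large d), and let G be an (n,d)-Ramanujan graph. Let γ be an integer with γ ≥ 2 + log₂ n. Then every (γ, δ(d))-dense-neighborhood S for a vertex v of G contains at least 4n·d^{-1/4} vertices, where δ(d) = (d^{7/8} − d^{5/8})/2. -/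
/-!
Write `T i = S ∩ N^i(v)`. For `i < γ` every vertex of `T i` has at least `δ` neighbours in
`T (i + 1)`, so the expander mixing lemma gives
`δ |T i| ≤ d |T i| |T (i+1)| / n + 2 √(d-1) √(|T i| |T (i+1)|)`.
If `|S| < 4 n d^{-1/4}`, the first term is at most `4 d^{3/4} |T i|`, and `δ ≥ 8 d^{3/4} + 4 √d`
leaves `2 |T i| ≤ √(|T i| |T (i+1)|)`, i.e. `|T (i+1)| ≥ 4 |T i|`.
Hence `|T γ| ≥ 4^γ > n` since `γ > log₂ n`, which is absurd.
-/

open Finset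

/-- `N^i(v)`: the set of vertices at graph distance at most `i` from `v`. -/
def genNbhd {V : Type*} (G : SimpleGraph V) (v : V) (i : ℕ) : Set V :=
  {u | ∃ w : G.Walk v u, w.length ≤ i}

/-- A finite set `S` of vertices is a `(γ,δ)`-dense-neighborhood for `v` if `v ∈ S`,
`S ⊆ N^γ(v)`, and every vertex of `S ∩ N^{γ−1}(v)` has at least `δ` neighbors in `S`. -/
def IsDenseNbhd {V : Type*} [Fintype V] [DecidableEq V]
    (G : SimpleGraph V) [DecidableRel G.Adj] (v : V) (γ : ℕ) (δ : ℝ)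
    (S : Finset V) : Prop :=
  v ∈ S ∧ (S : Set V) ⊆ genNbhd G v γ ∧
    ∀ u ∈ S, u ∈ genNbhd G v (γ - 1) → δ ≤ ((G.neighborFinset u ∩ S).card : ℝ)

lemma sum_le_sqrt_card_mul_sqrt_sum_sq {ι : Type*} [Fintype ι] (s : Finset ι) (f : ι → ℝ) :
    ∑ i ∈ s, f i ≤ √(#s) * √(∑ i, f i ^ 2) := by
  rw [← Real.sqrt_mul (by positivity)]
  refine Real.le_sqrt_of_sq_le (sq_sum_le_card_mul_sum_sq.trans ?_)
  exact mul_le_mul_of_nonneg_left (sum_le_univ_sum_of_nonneg fun i => sq_nonneg (f i))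
    (by positivity)

lemma four_mul_le_of_two_mul_le_sqrt_mul {a b : ℝ} (ha : 0 < a) (h : 2 * a ≤ √(a * b)) :
    4 * a ≤ b := by
  have := (Real.le_sqrt' (by positivity)).1 h
  nlinarith

lemma mul_rpow_neg_one_div_four {x : ℝ} (hx : x ≠ 0) :
    x * x ^ (-(1 / 4 : ℝ)) = x ^ (3 / 4 : ℝ) := by
  rw [show (3 / 4 : ℝ) = -(1 / 4) + 1 by norm_num, Real.rpow_add_one hx, mul_comm]

section Mixing

variable {V : Type*} [Fintype V] [DecidableEq V] {G : SimpleGraph V} [DecidableRel G.Adj]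
  {n d : ℕ}

lemma IsRamanujan.sum_mulVec_le (hG : IsRamanujan n d G) (A : Finset V) {x : V → ℝ}
    (hx : ∑ w, x w = 0) :
    ∑ u ∈ A, (G.adjMatrix ℝ).mulVec x u ≤
      √(#A) * (2 * √((d : ℝ) - 1) * √(∑ w, x w ^ 2)) := by
  grw [sum_le_sqrt_card_mul_sqrt_sum_sq, hG.2.2 x hx]

lemma sum_sq_indicator_sub_card_div_le (B : Finset V) :
    ∑ w, ((if w ∈ B then (1 : ℝ) else 0) - #B / Fintype.card V) ^ 2 ≤ #B := by
  set c : ℝ := #B / Fintype.card V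
  have hexpand : ∀ w, ((if w ∈ B then 1 else 0) - c) ^ 2 =
      (1 - 2 * c) * (if w ∈ B then 1 else 0) + c ^ 2 := by
    intro w; split_ifs <;> ring
  have hcard : (Fintype.card V : ℝ) * c ^ 2 = #B * c := by
    rcases (Fintype.card V).eq_zero_or_pos with h | h
    · simp [c, h]
    · rw [sq, ← mul_assoc, mul_div_cancel₀ _ (by positivity)]
  simp only [hexpand, sum_add_distrib, ← mul_sum, sum_boole, sum_const, card_univ, nsmul_eq_mul,
    filter_mem_eq_inter, univ_inter, hcard]
  nlinarith [show 0 ≤ c by positivity]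

/-- The (one-sided) expander mixing lemma. -/
theorem IsRamanujan.sum_card_neighborFinset_inter_le (hG : IsRamanujan n d G) (hn : 0 < n)
    (A B : Finset V) :
    ∑ u ∈ A, (#(G.neighborFinset u ∩ B) : ℝ) ≤
      d * #A * #B / n + 2 * √((d : ℝ) - 1) * √(#A * #B) := by
  have hn' : (n : ℝ) ≠ 0 := by exact_mod_cast hn.ne'
  set c : ℝ := #B / n
  set x : V → ℝ := fun w => (if w ∈ B then 1 else 0) - c
  have hx : ∑ w, x w = 0 := by
    simp [x, c, hG.1, mul_div_cancel₀ _ hn']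
  have hAx : ∀ u, (G.adjMatrix ℝ).mulVec x u = #(G.neighborFinset u ∩ B) - d * c := by
    intro u
    simp [x, SimpleGraph.adjMatrix_mulVec_apply, sum_sub_distrib, hG.2.1 u]
  have hx2 : ∑ w, x w ^ 2 ≤ #B := by
    have := sum_sq_indicator_sub_card_div_le B
    rwa [hG.1] at this
  have hbound := hG.sum_mulVec_le A hx
  simp only [hAx, sum_sub_distrib, sum_const, nsmul_eq_mul] at hbound
  grw [hx2] at hbound
  have hc : (#A : ℝ) * (d * c) = d * #A * #B / n := by
    simp only [c]
    ring
  rw [Real.sqrt_mul (by positivity)]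
  linarith

end Mixing

section DenseNbhd

variable {V : Type*} (G : SimpleGraph V) (v : V)

lemma self_mem_genNbhd (i : ℕ) : v ∈ genNbhd G v i := ⟨.nil, by simp⟩

open Classical in
noncomputable def genNbhdInter (i : ℕ) (S : Finset V) : Finset V :=
  {u ∈ S | u ∈ genNbhd G v i}

variable {G v}

lemma genNbhd_mono {i j : ℕ} (h : i ≤ j) : genNbhd G v i ⊆ genNbhd G v j :=
  fun _ ⟨w, hw⟩ => ⟨w, hw.trans h⟩

lemma mem_genNbhd_succ_of_adj {u w : V} {i : ℕ} (hu : u ∈ genNbhd G v i) (h : G.Adj u w) :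
    w ∈ genNbhd G v (i + 1) := by
  obtain ⟨p, hp⟩ := hu
  exact ⟨p.concat h, by rw [SimpleGraph.Walk.length_concat]; omega⟩

lemma mem_genNbhdInter {i : ℕ} {S : Finset V} {u : V} :
    u ∈ genNbhdInter G v i S ↔ u ∈ S ∧ u ∈ genNbhd G v i := by
  simp [genNbhdInter]

lemma genNbhdInter_subset (i : ℕ) (S : Finset V) : genNbhdInter G v i S ⊆ S :=
  fun _ hu => (mem_genNbhdInter.1 hu).1

variable [Fintype V] [DecidableEq V] [DecidableRel G.Adj]

lemma IsDenseNbhd.le_card_neighborFinset_inter_genNbhdInter_succ {γ i : ℕ} {δ : ℝ}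
    {S : Finset V} (hS : IsDenseNbhd G v γ δ S) (hi : i < γ) {u : V}
    (hu : u ∈ genNbhdInter G v i S) :
    δ ≤ #(G.neighborFinset u ∩ genNbhdInter G v (i + 1) S) := by
  obtain ⟨huS, hui⟩ := mem_genNbhdInter.1 hu
  refine (hS.2.2 u huS (genNbhd_mono (by omega) hui)).trans (Nat.cast_le.2 (card_le_card ?_))
  intro w hw
  obtain ⟨hwu, hwS⟩ := mem_inter.1 hw
  exact mem_inter.2 ⟨hwu, mem_genNbhdInter.2
    ⟨hwS, mem_genNbhd_succ_of_adj hui ((G.mem_neighborFinset u w).1 hwu)⟩⟩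

theorem IsRamanujan.four_mul_card_genNbhdInter_le {n d γ i : ℕ} {δ : ℝ} {S : Finset V}
    (hG : IsRamanujan n d G) (hn : 0 < n) (hd : 0 < d)
    (hδ : 8 * (d : ℝ) ^ (3 / 4 : ℝ) + 4 * √d ≤ δ) (hS : IsDenseNbhd G v γ δ S)
    (hsmall : (#S : ℝ) < 4 * n * (d : ℝ) ^ (-(1 / 4 : ℝ))) (hi : i < γ) :
    4 * (#(genNbhdInter G v i S) : ℝ) ≤ #(genNbhdInter G v (i + 1) S) := by
  set a := (#(genNbhdInter G v i S) : ℝ)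
  set b := (#(genNbhdInter G v (i + 1) S) : ℝ)
  have ha : 0 < a :=
    Nat.cast_pos.2 (card_pos.2 ⟨v, mem_genNbhdInter.2 ⟨hS.1, self_mem_genNbhd G v i⟩⟩)
  have hedges : δ * a ≤ d * b / n * a + 2 * √((d : ℝ) - 1) * √(a * b) :=
    calc δ * a = ∑ _u ∈ genNbhdInter G v i S, δ := by rw [sum_const, nsmul_eq_mul, mul_comm]
      _ ≤ ∑ u ∈ genNbhdInter G v i S,
            (#(G.neighborFinset u ∩ genNbhdInter G v (i + 1) S) : ℝ) :=
        sum_le_sum fun _ hu => hS.le_card_neighborFinset_inter_genNbhdInter_succ hi hu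
      _ ≤ d * a * b / n + 2 * √((d : ℝ) - 1) * √(a * b) :=
        hG.sum_card_neighborFinset_inter_le hn _ _
      _ = d * b / n * a + 2 * √((d : ℝ) - 1) * √(a * b) := by ring
  have hdensity : d * b / n ≤ 4 * (d : ℝ) ^ (3 / 4 : ℝ) := by
    have hbS : b ≤ #S := Nat.cast_le.2 (card_le_card (genNbhdInter_subset _ _))
    rw [div_le_iff₀ (by positivity), ← mul_rpow_neg_one_div_four (Nat.cast_pos.2 hd).ne']
    calc (d : ℝ) * b ≤ d * (4 * n * (d : ℝ) ^ (-(1 / 4 : ℝ))) := by gcongr; linarith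
      _ = _ := by ring
  have hsqrt : √((d : ℝ) - 1) ≤ √d := Real.sqrt_le_sqrt (by linarith)
  have hs : 0 < √(d : ℝ) := Real.sqrt_pos.2 (by exact_mod_cast hd)
  refine four_mul_le_of_two_mul_le_sqrt_mul ha (le_of_mul_le_mul_left ?_ hs)
  linarith [mul_le_mul_of_nonneg_right hδ ha.le, mul_le_mul_of_nonneg_right hdensity ha.le,
    mul_le_mul_of_nonneg_right hsqrt (Real.sqrt_nonneg (a * b)),
    mul_nonneg (by positivity : (0 : ℝ) ≤ (d : ℝ) ^ (3 / 4 : ℝ)) ha.le]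

theorem IsRamanujan.four_pow_le_card_genNbhdInter {n d γ : ℕ} {δ : ℝ} {S : Finset V}
    (hG : IsRamanujan n d G) (hn : 0 < n) (hd : 0 < d)
    (hδ : 8 * (d : ℝ) ^ (3 / 4 : ℝ) + 4 * √d ≤ δ) (hS : IsDenseNbhd G v γ δ S)
    (hsmall : (#S : ℝ) < 4 * n * (d : ℝ) ^ (-(1 / 4 : ℝ))) {i : ℕ} (hi : i ≤ γ) :
    (4 : ℝ) ^ i ≤ #(genNbhdInter G v i S) := by
  induction i with
  | zero =>
    simpa using card_pos.2 ⟨v, mem_genNbhdInter.2 ⟨hS.1, self_mem_genNbhd G v 0⟩⟩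
  | succ i ih =>
    calc (4 : ℝ) ^ (i + 1) = 4 * 4 ^ i := pow_succ' 4 i
      _ ≤ 4 * #(genNbhdInter G v i S) := by gcongr; exact ih (by omega)
      _ ≤ #(genNbhdInter G v (i + 1) S) :=
        hG.four_mul_card_genNbhdInter_le hn hd hδ hS hsmall (by omega)

end DenseNbhd

/-- in an `(n,d)`-Ramanujan graph with `d ≥ 16` and
`δ(d) ≥ 8·d^{3/4} + 4·√d`, every `(γ, δ(d))`-dense-neighborhood for a vertex `v`,
where `γ ≥ 2 + log₂ n`, contains at least `4n·d^{-1/4}` vertices. -/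
theorem ramanujan_dense_nbhd_large {V : Type*} [Fintype V] [DecidableEq V]
    (n d : ℕ) (hn : 0 < n) (hd : 16 ≤ d)
    (hd' : 8 * (d : ℝ) ^ (3 / 4 : ℝ) + 4 * Real.sqrt d ≤ deltaOf d)
    (G : SimpleGraph V) [DecidableRel G.Adj] (hG : IsRamanujan n d G)
    (γ : ℕ) (hγ : 2 + Real.logb 2 n ≤ (γ : ℝ))
    (v : V) (S : Finset V) (hS : IsDenseNbhd G v γ (deltaOf d) S) :
    4 * (n : ℝ) * (d : ℝ) ^ (-(1 / 4 : ℝ)) ≤ S.card := by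
  by_contra! hsmall
  have hn_lt : (n : ℝ) < 2 ^ γ := by
    rw [← Real.rpow_natCast, ← Real.logb_lt_iff_lt_rpow one_lt_two (by exact_mod_cast hn)]
    linarith
  have hgrowth := hG.four_pow_le_card_genNbhdInter hn (by omega) hd' hS hsmall le_rfl
  have hcard : (#(genNbhdInter G v γ S) : ℝ) ≤ n := by exact_mod_cast hG.1 ▸ card_le_univ _
  have hpow : (2 : ℝ) ^ γ ≤ 4 ^ γ := pow_le_pow_left₀ (by norm_num) (by norm_num) γ
  linarith
end

section
/- Let n and t be natural numbers with n ≥ 1 and 4(t+1) ≤ n. Then C(n, t+1)² · ((2t+1)/n)^{10(t+1)} < 1, where C(n, t+1) denotes the binomial coefficient 'n choose t+1' and the expression is evaluated over the real numbers. -/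
/-- Auxiliary: `k^k ≤ 8^k · k!` over the reals. -/
lemma pow_self_le_eight_pow_mul_factorial (k : ℕ) :
    (k : ℝ) ^ k ≤ 8 ^ k * (Nat.factorial k : ℝ) := by
  induction k with
  | zero => simp
  | succ k ih =>
    rcases Nat.eq_zero_or_pos k with hk | hk
    · subst hk; norm_num
    · have hkR : (0 : ℝ) < (k : ℝ) := by exact_mod_cast hk
      have h3 : ((k : ℝ) + 1) ^ k ≤ 3 * (k : ℝ) ^ k := by
        have hx : (1 / (k : ℝ) + 1) ≤ Real.exp (1 / k) := Real.add_one_le_exp _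
        have hx0 : (0 : ℝ) ≤ 1 / (k : ℝ) + 1 := by positivity
        have hpow : (1 / (k : ℝ) + 1) ^ k ≤ (Real.exp (1 / k)) ^ k :=
          pow_le_pow_left₀ hx0 hx k
        have hexp : (Real.exp (1 / (k : ℝ))) ^ k = Real.exp 1 := by
          rw [← Real.exp_nat_mul]
          congr 1
          field_simp
        have he3 : Real.exp 1 ≤ 3 :=
          (Real.exp_one_lt_d9.le).trans (by norm_num)
        have hsplit : ((k : ℝ) + 1) ^ k = (k : ℝ) ^ k * (1 / (k : ℝ) + 1) ^ k := by
          rw [← mul_pow]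
          congr 1
          field_simp
          ring
        rw [hsplit]
        calc (k : ℝ) ^ k * (1 / (k : ℝ) + 1) ^ k
            ≤ (k : ℝ) ^ k * Real.exp 1 := by
              rw [← hexp]
              exact mul_le_mul_of_nonneg_left hpow (by positivity)
          _ ≤ (k : ℝ) ^ k * 3 := mul_le_mul_of_nonneg_left he3 (by positivity)
          _ = 3 * (k : ℝ) ^ k := by ring
      have hkk : (0 : ℝ) ≤ (k : ℝ) ^ k := by positivity
      push_cast [Nat.factorial_succ]
      rw [pow_succ]
      calc ((k : ℝ) + 1) ^ k * ((k : ℝ) + 1)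
          ≤ (3 * (k : ℝ) ^ k) * ((k : ℝ) + 1) :=
            mul_le_mul_of_nonneg_right h3 (by positivity)
        _ ≤ (3 * (8 ^ k * (Nat.factorial k : ℝ))) * ((k : ℝ) + 1) := by
            have := mul_le_mul_of_nonneg_left ih (by norm_num : (0:ℝ) ≤ 3)
            exact mul_le_mul_of_nonneg_right this (by positivity)
        _ ≤ (8 * (8 ^ k * (Nat.factorial k : ℝ))) * ((k : ℝ) + 1) := by
            have h8 : (0:ℝ) ≤ 8 ^ k * (Nat.factorial k : ℝ) := by positivity
            nlinarith
        _ = 8 ^ k * 8 * (((k : ℝ) + 1) * (Nat.factorial k : ℝ)) := by ring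
      
/-- for natural numbers `n ≥ 1` and `t` with `4(t+1) ≤ n`, one has
`C(n, t+1)² · ((2t+1)/n)^{10(t+1)} < 1` over the real numbers. -/
theorem union_bound_overlay_graphs (n t : ℕ) (hn : 1 ≤ n) (h : 4 * (t + 1) ≤ n) :
    ((n.choose (t + 1) : ℝ)) ^ 2 * (((2 * t + 1 : ℕ) : ℝ) / n) ^ (10 * (t + 1)) < 1 := by
  set k := t + 1 with hkdef
  set K : ℝ := (k : ℝ) with hKdef
  set N : ℝ := (n : ℝ) with hNdef
  set F : ℝ := (Nat.factorial k : ℝ) with hFdef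
  set C : ℝ := (n.choose k : ℝ) with hCdef
  have hK1 : (1 : ℝ) ≤ K := by rw [hKdef]; exact_mod_cast Nat.one_le_iff_ne_zero.mpr (Nat.succ_ne_zero t)
  have hK0 : (0 : ℝ) < K := lt_of_lt_of_le one_pos hK1
  have hN4 : 4 * K ≤ N := by rw [hKdef, hNdef]; exact_mod_cast h
  have hN0 : (0 : ℝ) < N := by positivity
  have hF0 : (0 : ℝ) < F := by rw [hFdef]; exact_mod_cast Nat.factorial_pos k
  have hkn : k ≤ n := le_trans (by omega) h
  have hC1 : (1 : ℝ) ≤ C := by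
    rw [hCdef]
    exact_mod_cast Nat.choose_pos hkn
  have hCF : C * F ≤ N ^ k := by
    have hch : C ≤ (N ^ k) / F := by
      have := Nat.choose_le_pow_div (α := ℝ) k n
      simpa [hCdef, hNdef, hFdef] using this
    exact (le_div_iff₀ hF0).mp hch
  have aux : K ^ k ≤ 8 ^ k * F := pow_self_le_eight_pow_mul_factorial k
  -- core inequality
  have core : (2 * K) ^ (10 * k) ≤ (4 * K) ^ (8 * k) * F ^ 2 := by
    have h64 : (0 : ℝ) < (64 : ℝ) ^ k := by positivity
    refine le_of_mul_le_mul_right ?_ h64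
    have h1 : (2 * K) ^ (10 * k) * 64 ^ k = (4 * K) ^ (8 * k) * (K ^ k) ^ 2 := by
      have e2 : (2 * K) ^ (10 * k) = ((2 * K) ^ 10) ^ k := pow_mul _ _ _
      have e4 : (4 * K) ^ (8 * k) = ((4 * K) ^ 8) ^ k := pow_mul _ _ _
      have eK : (K ^ k) ^ 2 = (K ^ 2) ^ k := by rw [← pow_mul, ← pow_mul, mul_comm]
      rw [e2, e4, eK, ← mul_pow, ← mul_pow]
      congr 1
      ring
    have h2 : (K ^ k) ^ 2 ≤ (8 ^ k * F) ^ 2 :=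
      pow_le_pow_left₀ (by positivity) aux 2
    have h3 : (8 ^ k * F : ℝ) ^ 2 = F ^ 2 * 64 ^ k := by
      have e8 : ((8 : ℝ) ^ k) ^ 2 = 64 ^ k := by
        rw [← pow_mul, mul_comm, pow_mul]
        norm_num
      rw [mul_pow, e8]
      ring
    calc (2 * K) ^ (10 * k) * 64 ^ k = (4 * K) ^ (8 * k) * (K ^ k) ^ 2 := h1
      _ ≤ (4 * K) ^ (8 * k) * (8 ^ k * F) ^ 2 :=
          mul_le_mul_of_nonneg_left h2 (by positivity)
      _ = (4 * K) ^ (8 * k) * F ^ 2 * 64 ^ k := by rw [h3]; ring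
  -- key inequality
  have key : C ^ 2 * (2 * K) ^ (10 * k) ≤ N ^ (10 * k) := by
    have hF2 : (0 : ℝ) < F ^ 2 := by positivity
    refine le_of_mul_le_mul_right ?_ hF2
    have hCF2 : (C * F) ^ 2 ≤ (N ^ k) ^ 2 := pow_le_pow_left₀ (by positivity) hCF 2
    have h48 : (4 * K) ^ (8 * k) ≤ N ^ (8 * k) := pow_le_pow_left₀ (by positivity) hN4 _
    calc C ^ 2 * (2 * K) ^ (10 * k) * F ^ 2
        = (C * F) ^ 2 * (2 * K) ^ (10 * k) := by ring
      _ ≤ (N ^ k) ^ 2 * (2 * K) ^ (10 * k) :=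
          mul_le_mul_of_nonneg_right hCF2 (by positivity)
      _ ≤ (N ^ k) ^ 2 * ((4 * K) ^ (8 * k) * F ^ 2) :=
          mul_le_mul_of_nonneg_left core (by positivity)
      _ ≤ (N ^ k) ^ 2 * (N ^ (8 * k) * F ^ 2) := by
          have := mul_le_mul_of_nonneg_right h48 (le_of_lt hF2)
          exact mul_le_mul_of_nonneg_left this (by positivity)
      _ = N ^ (10 * k) * F ^ 2 := by
          rw [← pow_mul, ← mul_assoc, ← pow_add, show k * 2 + 8 * k = 10 * k from by ring]
  -- now the strict step
  have hM : ((2 * t + 1 : ℕ) : ℝ) < 2 * K := by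
    push_cast [hKdef, hkdef]
    linarith
  have hM0 : (0 : ℝ) ≤ ((2 * t + 1 : ℕ) : ℝ) := by positivity
  have hstrict : ((2 * t + 1 : ℕ) : ℝ) ^ (10 * k) < (2 * K) ^ (10 * k) :=
    pow_lt_pow_left₀ hM hM0 (by omega)
  have hgoal : C ^ 2 * ((2 * t + 1 : ℕ) : ℝ) ^ (10 * k) < N ^ (10 * k) := by
    calc C ^ 2 * ((2 * t + 1 : ℕ) : ℝ) ^ (10 * k)
        < C ^ 2 * (2 * K) ^ (10 * k) := by
          have hC2 : (0 : ℝ) < C ^ 2 := by positivity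
          exact mul_lt_mul_of_pos_left hstrict hC2
      _ ≤ N ^ (10 * k) := key
  rw [div_pow, mul_div_assoc', div_lt_one (by positivity : (0:ℝ) < N ^ (10 * k))]
  exact hgoal
end
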